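/- (Lemma A.4(ii)) If condition (A.16) holds, then V_2 + V_3 = ((−1)^{n(h,1)} / (2^{β/2 + 1} · i^{n_3})) · [exp((iπ/4)(f_3^h − f_1^h)) + (−1)^{n_3} · exp(−(iπ/4)(f_3^h − f_1^h))]. -/
import Mathlib


open Real Finset

noncomputable section

/-- The trigonometric argument π/4 + (π/2)·t. -/
def trigArg (t : ℝ) : ℝ := Real.pi / 4 + Real.pi / 2 * t

/-- The dot product a'w = Σ_j a_j w_j as a real number. -/
def dotR {n : ℕ} (a w : Fin n → Fin 4) : ℝ :=
  ∑ j, ((a j : ℕ) : ℝ) * ((w j : ℕ) : ℝ)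

/-- ψ(a), depending on the pairwise disjoint subsets S₁, S₂, S₃. -/
def psi {n : ℕ} (S1 S2 S3 : Finset (Fin n)) (a : Fin n → Fin 4) : ℝ :=
  (∏ j ∈ S1, (Real.sin (trigArg ((a j : ℕ) : ℝ)) * Real.cos (trigArg ((a j : ℕ) : ℝ)))) *
  (∏ j ∈ S2, Real.cos (trigArg ((a j : ℕ) : ℝ))) *
  (∏ j ∈ S3, Real.sin (trigArg ((a j : ℕ) : ℝ)))

/-- S₁, S₂, S₃ are pairwise disjoint. -/
def PairwiseDisj {n : ℕ} (S1 S2 S3 : Finset (Fin n)) : Prop :=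
  Disjoint S1 S2 ∧ Disjoint S1 S3 ∧ Disjoint S2 S3

/-- a'g = Σ_j a_j g_j with g_j = u_j + v_j (ordinary integers), as a real number. -/
def dotG {n : ℕ} (u v a : Fin n → Fin 4) : ℝ :=
  ∑ j, ((a j : ℕ) : ℝ) * (((u j : ℕ) : ℝ) + ((v j : ℕ) : ℝ))

/-- a'h = Σ_j a_j h_j with h_j = u_j − v_j (ordinary integers), as a real number. -/
def dotH {n : ℕ} (u v a : Fin n → Fin 4) : ℝ :=
  ∑ j, ((a j : ℕ) : ℝ) * (((u j : ℕ) : ℝ) - ((v j : ℕ) : ℝ))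

/-- The coefficient 2^{(m+2)/2 − 2n}. -/
def coefPow (n m : ℕ) : ℝ := (2 : ℝ) ^ (((m + 2 : ℕ) : ℝ) / 2 - 2 * (n : ℝ))

def V1 {n : ℕ} (u v : Fin n → Fin 4) (S1 S2 S3 : Finset (Fin n)) : ℂ :=
  ∑ a : Fin n → Fin 4,
    ((coefPow n (2 * S1.card + S2.card + S3.card) : ℝ) : ℂ) * (1 / 4) *
      Complex.exp (Complex.I * ((Real.pi : ℂ) / 2) * (((1 + dotG u v a : ℝ)) : ℂ)) *
      ((psi S1 S2 S3 a : ℝ) : ℂ)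

def V2 {n : ℕ} (u v : Fin n → Fin 4) (S1 S2 S3 : Finset (Fin n)) : ℂ :=
  ∑ a : Fin n → Fin 4,
    ((coefPow n (2 * S1.card + S2.card + S3.card) : ℝ) : ℂ) * (1 / 4) *
      Complex.exp (Complex.I * ((Real.pi : ℂ) / 2) * ((dotH u v a : ℝ) : ℂ)) *
      ((psi S1 S2 S3 a : ℝ) : ℂ)

def V3 {n : ℕ} (u v : Fin n → Fin 4) (S1 S2 S3 : Finset (Fin n)) : ℂ :=
  ∑ a : Fin n → Fin 4,
    ((coefPow n (2 * S1.card + S2.card + S3.card) : ℝ) : ℂ) * (1 / 4) *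
      Complex.exp (-(Complex.I * ((Real.pi : ℂ) / 2) * ((dotH u v a : ℝ) : ℂ))) *
      ((psi S1 S2 S3 a : ℝ) : ℂ)

def V4 {n : ℕ} (u v : Fin n → Fin 4) (S1 S2 S3 : Finset (Fin n)) : ℂ :=
  ∑ a : Fin n → Fin 4,
    ((coefPow n (2 * S1.card + S2.card + S3.card) : ℝ) : ℂ) * (1 / 4) *
      Complex.exp (-(Complex.I * ((Real.pi : ℂ) / 2) * (((1 + dotG u v a : ℝ)) : ℂ))) *
      ((psi S1 S2 S3 a : ℝ) : ℂ)

/-- Δ_k^g = {j : g_j ≡ k (mod 4)} where g_j = u_j + v_j. -/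
def DeltaG {n : ℕ} (u v : Fin n → Fin 4) (k : ℕ) : Finset (Fin n) :=
  Finset.univ.filter (fun j => ((u j : ℕ) + (v j : ℕ)) % 4 = k)

/-- Δ_k^h = {j : h_j ≡ k (mod 4)} where h_j = u_j − v_j (an integer). -/
def DeltaH {n : ℕ} (u v : Fin n → Fin 4) (k : ℤ) : Finset (Fin n) :=
  Finset.univ.filter (fun j => (((u j : ℕ) : ℤ) - ((v j : ℕ) : ℤ)) % 4 = k)

/-- Condition (A.15): S₁ = Δ₂^g, S₂ ∪ S₃ = Δ₁^g ∪ Δ₃^g, S₄ = Δ₀^g. -/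
def CondA15 {n : ℕ} (u v : Fin n → Fin 4) (S1 S2 S3 : Finset (Fin n)) : Prop :=
  S1 = DeltaG u v 2 ∧ S2 ∪ S3 = DeltaG u v 1 ∪ DeltaG u v 3 ∧
    Finset.univ \ (S1 ∪ S2 ∪ S3) = DeltaG u v 0

/-- Condition (A.16): S₁ = Δ₂^h, S₂ ∪ S₃ = Δ₁^h ∪ Δ₃^h, S₄ = Δ₀^h. -/
def CondA16 {n : ℕ} (u v : Fin n → Fin 4) (S1 S2 S3 : Finset (Fin n)) : Prop :=
  S1 = DeltaH u v 2 ∧ S2 ∪ S3 = DeltaH u v 1 ∪ DeltaH u v 3 ∧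
    Finset.univ \ (S1 ∪ S2 ∪ S3) = DeltaH u v 0

/-- Δ_{ks} = {j : u_j = k, v_j = s}. -/
def DeltaKS {n : ℕ} (u v : Fin n → Fin 4) (k s : Fin 4) : Finset (Fin n) :=
  Finset.univ.filter (fun j => u j = k ∧ v j = s)

/-- f_{ks} = #Δ_{ks}. -/
def freq {n : ℕ} (u v : Fin n → Fin 4) (k s : Fin 4) : ℕ := (DeltaKS u v k s).card

def lam1 {n : ℕ} (u v : Fin n → Fin 4) : ℕ := freq u v 1 0 + freq u v 3 0
def lam2 {n : ℕ} (u v : Fin n → Fin 4) : ℕ := freq u v 0 1 + freq u v 0 3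
def lam3 {n : ℕ} (u v : Fin n → Fin 4) : ℕ := freq u v 1 2 + freq u v 3 2
def lam4 {n : ℕ} (u v : Fin n → Fin 4) : ℕ := freq u v 2 1 + freq u v 2 3
def lam5 {n : ℕ} (u v : Fin n → Fin 4) : ℕ := freq u v 1 1 + freq u v 3 3
def lam6 {n : ℕ} (u v : Fin n → Fin 4) : ℕ := freq u v 1 3 + freq u v 3 1

/-- β = λ₁ + λ₂ + λ₃ + λ₄. -/
def betaval {n : ℕ} (u v : Fin n → Fin 4) : ℕ :=
  lam1 u v + lam2 u v + lam3 u v + lam4 u v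

/-- Δ⁽¹⁾ = Δ₁₀ ∪ Δ₁₂ ∪ Δ₃₀ ∪ Δ₃₂. -/
def DeltaOne {n : ℕ} (u v : Fin n → Fin 4) : Finset (Fin n) :=
  DeltaKS u v 1 0 ∪ DeltaKS u v 1 2 ∪ DeltaKS u v 3 0 ∪ DeltaKS u v 3 2

/-- Δ⁽²⁾ = Δ₀₁ ∪ Δ₀₃ ∪ Δ₂₁ ∪ Δ₂₃. -/
def DeltaTwo {n : ℕ} (u v : Fin n → Fin 4) : Finset (Fin n) :=
  DeltaKS u v 0 1 ∪ DeltaKS u v 0 3 ∪ DeltaKS u v 2 1 ∪ DeltaKS u v 2 3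

/-- Condition (A.23): S₁ = Δ₀₂ ∪ Δ₂₀, S₂ ∪ S₃ = Δ, S₄ = Δ₀₀ ∪ Δ₂₂. -/
def CondA23 {n : ℕ} (u v : Fin n → Fin 4) (S1 S2 S3 : Finset (Fin n)) : Prop :=
  S1 = DeltaKS u v 0 2 ∪ DeltaKS u v 2 0 ∧
    S2 ∪ S3 = DeltaOne u v ∪ DeltaTwo u v ∧
    Finset.univ \ (S1 ∪ S2 ∪ S3) = DeltaKS u v 0 0 ∪ DeltaKS u v 2 2


-- ===================== auxiliary machinery =====================

/-- h_j = u_j - v_j as an integer. -/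
def hh {n : ℕ} (u v : Fin n → Fin 4) (j : Fin n) : ℤ := ((u j : ℕ) : ℤ) - ((v j : ℕ) : ℤ)

/-- the per-coordinate factor of ψ, extended by 1 outside S₁ ∪ S₂ ∪ S₃. -/
def phiF {n : ℕ} (S1 S2 S3 : Finset (Fin n)) (j : Fin n) (x : Fin 4) : ℝ :=
  if j ∈ S1 then Real.sin (trigArg ((x:ℕ):ℝ)) * Real.cos (trigArg ((x:ℕ):ℝ))
  else if j ∈ S2 then Real.cos (trigArg ((x:ℕ):ℝ))
  else if j ∈ S3 then Real.sin (trigArg ((x:ℕ):ℝ))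
  else 1

def wq : ℂ := Complex.exp (Complex.I * ((Real.pi:ℂ)/4))

-- trig values
lemma sin_tA0 : Real.sin (trigArg 0) = Real.sqrt 2 / 2 := by
  simp [trigArg, Real.sin_pi_div_four]
lemma cos_tA0 : Real.cos (trigArg 0) = Real.sqrt 2 / 2 := by
  simp [trigArg, Real.cos_pi_div_four]
lemma tA_succ (t : ℝ) : trigArg (t + 1) = trigArg t + Real.pi/2 := by
  simp [trigArg]; ring
lemma sin_tA1 : Real.sin (trigArg 1) = Real.sqrt 2 / 2 := by
  have := tA_succ 0; norm_num at this
  rw [this, Real.sin_add_pi_div_two, cos_tA0]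
lemma cos_tA1 : Real.cos (trigArg 1) = -(Real.sqrt 2 / 2) := by
  have := tA_succ 0; norm_num at this
  rw [this, Real.cos_add_pi_div_two, sin_tA0]
lemma sin_tA2 : Real.sin (trigArg 2) = -(Real.sqrt 2 / 2) := by
  have := tA_succ 1; norm_num at this
  rw [this, Real.sin_add_pi_div_two, cos_tA1]
lemma cos_tA2 : Real.cos (trigArg 2) = -(Real.sqrt 2 / 2) := by
  have := tA_succ 1; norm_num at this
  rw [this, Real.cos_add_pi_div_two, sin_tA1]
lemma sin_tA3 : Real.sin (trigArg 3) = -(Real.sqrt 2 / 2) := by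
  have := tA_succ 2; norm_num at this
  rw [this, Real.sin_add_pi_div_two, cos_tA2]
lemma cos_tA3 : Real.cos (trigArg 3) = Real.sqrt 2 / 2 := by
  have := tA_succ 2; norm_num at this
  rw [this, Real.cos_add_pi_div_two, sin_tA2]; ring

lemma fc0 : (((0:Fin 4):ℕ):ℝ) = 0 := by norm_num
lemma fc1 : (((1:Fin 4):ℕ):ℝ) = 1 := by norm_num
lemma fc2 : (((2:Fin 4):ℕ):ℝ) = 2 := by norm_num
lemma fc3 : (((3:Fin 4):ℕ):ℝ) = 3 := by norm_num [show ((3:Fin 4):ℕ) = 3 from rfl]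
lemma fp0 : ∀ z : ℂ, z^((0:Fin 4):ℕ) = 1 := fun _ => rfl
lemma fp1 : ∀ z : ℂ, z^((1:Fin 4):ℕ) = z := fun z => pow_one z
lemma fp2 : ∀ z : ℂ, z^((2:Fin 4):ℕ) = z*z := fun z => sq z
lemma fp3 : ∀ z : ℂ, z^((3:Fin 4):ℕ) = z*z*z := fun z => pow_three' z

lemma sqrt2_sq : ((Real.sqrt 2 : ℝ):ℂ) * ((Real.sqrt 2 : ℝ):ℂ) = 2 := by
  norm_cast; exact Real.mul_self_sqrt (by norm_num)

-- the four single-coordinate sums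
lemma sum_sc : ∑ x : Fin 4, (-1:ℂ)^((x:ℕ)) *
    ((Real.sin (trigArg ((x:ℕ):ℝ)) * Real.cos (trigArg ((x:ℕ):ℝ)) : ℝ):ℂ) = 2 := by
  rw [Fin.sum_univ_four]
  simp only [fc0, fc1, fc2, fc3, fp0, fp1, fp2, fp3, Complex.I_mul_I, neg_mul_neg, neg_neg,
    mul_neg, neg_mul, one_mul, mul_one, sin_tA0, cos_tA0, sin_tA1, cos_tA1,
    sin_tA2, cos_tA2, sin_tA3, cos_tA3]
  push_cast
  linear_combination sqrt2_sq

lemma sum_one : ∑ x : Fin 4, ((1:ℂ))^((x:ℕ)) * (((1:ℝ)):ℂ) = 4 := by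
  rw [Fin.sum_univ_four]; norm_num

lemma sum_c_I : ∑ x : Fin 4, (Complex.I)^((x:ℕ)) * ((Real.cos (trigArg ((x:ℕ):ℝ)) : ℝ):ℂ)
    = ((Real.sqrt 2:ℝ):ℂ) * (1 - Complex.I) := by
  rw [Fin.sum_univ_four]
  simp only [fc0, fc1, fc2, fc3, fp0, fp1, fp2, fp3, Complex.I_mul_I, neg_mul_neg, neg_neg,
    mul_neg, neg_mul, one_mul, mul_one, cos_tA0, cos_tA1, cos_tA2, cos_tA3]
  push_cast; ring

lemma sum_c_negI : ∑ x : Fin 4, (-Complex.I)^((x:ℕ)) * ((Real.cos (trigArg ((x:ℕ):ℝ)) : ℝ):ℂ)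
    = ((Real.sqrt 2:ℝ):ℂ) * (1 + Complex.I) := by
  rw [Fin.sum_univ_four]
  simp only [fc0, fc1, fc2, fc3, fp0, fp1, fp2, fp3, Complex.I_mul_I, neg_mul_neg, neg_neg,
    mul_neg, neg_mul, one_mul, mul_one, cos_tA0, cos_tA1, cos_tA2, cos_tA3]
  push_cast; ring

lemma sum_s_I : ∑ x : Fin 4, (Complex.I)^((x:ℕ)) * ((Real.sin (trigArg ((x:ℕ):ℝ)) : ℝ):ℂ)
    = ((Real.sqrt 2:ℝ):ℂ) * (1 + Complex.I) := by
  rw [Fin.sum_univ_four]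
  simp only [fc0, fc1, fc2, fc3, fp0, fp1, fp2, fp3, Complex.I_mul_I, neg_mul_neg, neg_neg,
    mul_neg, neg_mul, one_mul, mul_one, sin_tA0, sin_tA1, sin_tA2, sin_tA3]
  push_cast; ring

lemma sum_s_negI : ∑ x : Fin 4, (-Complex.I)^((x:ℕ)) * ((Real.sin (trigArg ((x:ℕ):ℝ)) : ℝ):ℂ)
    = ((Real.sqrt 2:ℝ):ℂ) * (1 - Complex.I) := by
  rw [Fin.sum_univ_four]
  simp only [fc0, fc1, fc2, fc3, fp0, fp1, fp2, fp3, Complex.I_mul_I, neg_mul_neg, neg_neg,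
    mul_neg, neg_mul, one_mul, mul_one, sin_tA0, sin_tA1, sin_tA2, sin_tA3]
  push_cast; ring

-- wq facts
lemma wdef : wq = ((Real.sqrt 2 / 2 : ℝ):ℂ) * (1 + Complex.I) := by
  rw [wq, show Complex.I * ((Real.pi:ℂ)/4) = ((Real.pi/4 : ℝ):ℂ) * Complex.I by push_cast; ring,
    Complex.exp_mul_I, ← Complex.ofReal_cos, ← Complex.ofReal_sin,
    Real.cos_pi_div_four, Real.sin_pi_div_four]
  push_cast; ring

lemma wq_ne : wq ≠ 0 := Complex.exp_ne_zero _

lemma two_wq : ((Real.sqrt 2:ℝ):ℂ) * (1 + Complex.I) = 2 * wq := by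
  rw [wdef]; push_cast; ring

lemma wq_sq : wq^2 = Complex.I := by
  rw [wdef]; push_cast
  linear_combination ((1+2*Complex.I+Complex.I^2)/4) * sqrt2_sq + (1/2) * Complex.I_sq

lemma two_wq_inv : ((Real.sqrt 2:ℝ):ℂ) * (1 - Complex.I) = 2 * wq⁻¹ := by
  rw [eq_comm, mul_inv_eq_iff_eq_mul₀ wq_ne, wdef]
  push_cast
  linear_combination ((Complex.I^2-1)/2) * sqrt2_sq + Complex.I_sq

lemma wq_pow8 : wq^(8:ℕ) = 1 := by
  rw [show (8:ℕ) = 2*4 from rfl, pow_mul, wq_sq, Complex.I_pow_four]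

lemma wq_pow4 : wq^(4:ℕ) = -1 := by
  rw [show (4:ℕ) = 2*2 from rfl, pow_mul, wq_sq, Complex.I_sq]

lemma wq_inv7 : wq⁻¹ = wq^(7:ℕ) := by
  refine inv_eq_of_mul_eq_one_right ?_
  rw [← pow_succ', wq_pow8]

lemma wq_pow_inv (k : ℕ) : (wq^k)⁻¹ = wq^(7*k) := by
  rw [← inv_pow, wq_inv7, ← pow_mul, mul_comm]

lemma wq_pow_congr (a b : ℕ) (h : a % 8 = b % 8) : wq^a = wq^b := by
  conv_lhs => rw [← Nat.div_add_mod a 8]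
  conv_rhs => rw [← Nat.div_add_mod b 8]
  rw [pow_add, pow_add, pow_mul, pow_mul, wq_pow8, one_pow, one_pow, h]

lemma wq_zpow_sub (x y : ℕ) : wq^((x:ℤ) - (y:ℤ)) = wq^x * wq^(7*y) := by
  rw [zpow_sub₀ wq_ne, zpow_natCast, zpow_natCast, div_eq_mul_inv, wq_pow_inv]

-- complex exponential facts
lemma exp_pi_div_two_I : Complex.exp ((Real.pi : ℂ)/2 * Complex.I) = Complex.I := by
  rw [show ((Real.pi:ℂ)/2) = ((Real.pi/2 : ℝ):ℂ) by push_cast; ring, Complex.exp_mul_I,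
    ← Complex.ofReal_cos, ← Complex.ofReal_sin, Real.cos_pi_div_two, Real.sin_pi_div_two]
  simp

lemma expIH (h : ℤ) : Complex.exp (Complex.I * ((Real.pi:ℂ)/2) * (h:ℂ)) = Complex.I ^ h := by
  rw [show Complex.I * ((Real.pi:ℂ)/2) * (h:ℂ) = (h:ℂ) * ((Real.pi:ℂ)/2 * Complex.I) by ring,
    Complex.exp_int_mul, exp_pi_div_two_I]

lemma expQuarter (d : ℤ) : Complex.exp (Complex.I * ((Real.pi:ℂ)/4) * (d:ℂ)) = wq ^ d := by
  rw [show Complex.I * ((Real.pi:ℂ)/4) * (d:ℂ) = (d:ℂ) * (Complex.I * ((Real.pi:ℂ)/4)) by ring,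
    Complex.exp_int_mul, wq]

lemma Ipow_emod (h : ℤ) : Complex.I ^ h = Complex.I ^ (h % 4) := by
  conv_lhs => rw [← Int.mul_ediv_add_emod h 4]
  rw [zpow_add₀ Complex.I_ne_zero, zpow_mul,
    show ((4:ℤ)) = ((4:ℕ):ℤ) from rfl, zpow_natCast, Complex.I_pow_four, one_zpow, one_mul]

lemma Iz2 : Complex.I^(2:ℤ) = -1 := by
  rw [show (2:ℤ) = ((2:ℕ):ℤ) from rfl, zpow_natCast, Complex.I_sq]
lemma Iz3 : Complex.I^(3:ℤ) = -Complex.I := by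
  rw [show (3:ℤ) = ((3:ℕ):ℤ) from rfl, zpow_natCast, pow_succ, Complex.I_sq]; ring

-- factorization of the exponential over coordinates
lemma exp_factor {n : ℕ} (u v : Fin n → Fin 4) (a : Fin n → Fin 4) (s : ℤ) :
    Complex.exp ((s:ℂ) * (Complex.I * ((Real.pi:ℂ)/2) * ((dotH u v a:ℝ):ℂ))) =
    ∏ j, (Complex.I ^ (s * hh u v j))^((a j : ℕ)) := by
  have hcast : ((dotH u v a:ℝ):ℂ) = ∑ j, (((a j:ℕ) : ℂ) * (((u j:ℕ):ℂ) - ((v j:ℕ):ℂ))) := by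
    rw [dotH]; push_cast; ring
  rw [hcast, Finset.mul_sum, Finset.mul_sum, Complex.exp_sum]
  refine Finset.prod_congr rfl fun j _ => ?_
  have harg : (s:ℂ) * (Complex.I * ((Real.pi:ℂ)/2) * (((a j:ℕ):ℂ) * (((u j:ℕ):ℂ) - ((v j:ℕ):ℂ))))
      = Complex.I * ((Real.pi:ℂ)/2) * (((s * hh u v j * (a j:ℕ) : ℤ)):ℂ) := by
    rw [hh]; push_cast; ring
  rw [harg, expIH, zpow_mul, zpow_natCast]

lemma psi_eq {n : ℕ} (S1 S2 S3 : Finset (Fin n)) (hd : PairwiseDisj S1 S2 S3)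
    (a : Fin n → Fin 4) : psi S1 S2 S3 a = ∏ j, phiF S1 S2 S3 j (a j) := by
  obtain ⟨h12, h13, h23⟩ := hd
  have hsub : S1 ∪ S2 ∪ S3 ⊆ univ := Finset.subset_univ _
  rw [← Finset.prod_sdiff hsub]
  have h1 : ∏ j ∈ univ \ (S1 ∪ S2 ∪ S3), phiF S1 S2 S3 j (a j) = 1 := by
    refine Finset.prod_eq_one fun j hj => ?_
    simp only [Finset.mem_sdiff, Finset.mem_union, not_or] at hj
    simp [phiF, hj.2.1.1, hj.2.1.2, hj.2.2]
  rw [h1, one_mul, Finset.prod_union (Finset.disjoint_union_left.mpr ⟨h13, h23⟩),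
    Finset.prod_union h12, psi]
  congr 1
  · congr 1
    · exact Finset.prod_congr rfl fun j hj => by simp [phiF, hj]
    · refine Finset.prod_congr rfl fun j hj => ?_
      have : j ∉ S1 := Finset.disjoint_right.mp h12 hj
      simp [phiF, this, hj]
  · refine Finset.prod_congr rfl fun j hj => ?_
    have h1' : j ∉ S1 := Finset.disjoint_right.mp h13 hj
    have h2' : j ∉ S2 := Finset.disjoint_right.mp h23 hj
    simp [phiF, h1', h2', hj]

lemma V2_eq {n : ℕ} (u v : Fin n → Fin 4) (S1 S2 S3 : Finset (Fin n))
    (hd : PairwiseDisj S1 S2 S3) :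
    V2 u v S1 S2 S3 = ((coefPow n (2 * S1.card + S2.card + S3.card) : ℝ) : ℂ) * (1 / 4) *
      ∏ j, ∑ x : Fin 4, (Complex.I ^ (hh u v j))^((x:ℕ)) * ((phiF S1 S2 S3 j x : ℝ):ℂ) := by
  rw [V2]
  have step : ∀ a : Fin n → Fin 4,
      ((coefPow n (2 * S1.card + S2.card + S3.card) : ℝ) : ℂ) * (1 / 4) *
      Complex.exp (Complex.I * ((Real.pi : ℂ) / 2) * ((dotH u v a : ℝ) : ℂ)) *
      ((psi S1 S2 S3 a : ℝ) : ℂ) =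
      ((coefPow n (2 * S1.card + S2.card + S3.card) : ℝ) : ℂ) * (1 / 4) *
      ∏ j, ((Complex.I ^ (hh u v j))^((a j:ℕ)) * ((phiF S1 S2 S3 j (a j) : ℝ):ℂ)) := by
    intro a
    have he := exp_factor u v a 1
    simp only [Int.cast_one, one_mul] at he
    rw [he, psi_eq S1 S2 S3 hd a, Complex.ofReal_prod, mul_assoc, ← Finset.prod_mul_distrib]
  rw [Finset.sum_congr rfl fun a _ => step a, ← Finset.mul_sum]
  congr 1
  exact (Fintype.prod_sum (κ := fun _ : Fin n => Fin 4) fun j x => (Complex.I ^ (hh u v j))^((x:ℕ)) *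
    ((phiF S1 S2 S3 j x : ℝ):ℂ)).symm

lemma V3_eq {n : ℕ} (u v : Fin n → Fin 4) (S1 S2 S3 : Finset (Fin n))
    (hd : PairwiseDisj S1 S2 S3) :
    V3 u v S1 S2 S3 = ((coefPow n (2 * S1.card + S2.card + S3.card) : ℝ) : ℂ) * (1 / 4) *
      ∏ j, ∑ x : Fin 4, (Complex.I ^ (-hh u v j))^((x:ℕ)) * ((phiF S1 S2 S3 j x : ℝ):ℂ) := by
  rw [V3]
  have step : ∀ a : Fin n → Fin 4,
      ((coefPow n (2 * S1.card + S2.card + S3.card) : ℝ) : ℂ) * (1 / 4) *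
      Complex.exp (-(Complex.I * ((Real.pi : ℂ) / 2) * ((dotH u v a : ℝ) : ℂ))) *
      ((psi S1 S2 S3 a : ℝ) : ℂ) =
      ((coefPow n (2 * S1.card + S2.card + S3.card) : ℝ) : ℂ) * (1 / 4) *
      ∏ j, ((Complex.I ^ (-hh u v j))^((a j:ℕ)) * ((phiF S1 S2 S3 j (a j) : ℝ):ℂ)) := by
    intro a
    have he := exp_factor u v a (-1)
    simp only [Int.cast_neg, Int.cast_one, neg_one_mul, neg_mul, one_mul] at he
    rw [he, psi_eq S1 S2 S3 hd a, Complex.ofReal_prod, mul_assoc, ← Finset.prod_mul_distrib]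
  rw [Finset.sum_congr rfl fun a _ => step a, ← Finset.mul_sum]
  congr 1
  exact (Fintype.prod_sum (κ := fun _ : Fin n => Fin 4) fun j x => (Complex.I ^ (-hh u v j))^((x:ℕ)) *
    ((phiF S1 S2 S3 j x : ℝ):ℂ)).symm

-- constant-piece product evaluation
lemma piece_eval {n : ℕ} (b : Fin n → ℂ) (φ : Fin n → Fin 4 → ℝ) (s : Finset (Fin n))
    (z : ℂ) (g : Fin 4 → ℝ) (hz : ∀ j ∈ s, b j = z) (hφ : ∀ j ∈ s, ∀ x, φ j x = g x)
    (val : ℂ) (hval : ∑ x : Fin 4, z^((x:ℕ)) * ((g x : ℝ):ℂ) = val) :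
    ∏ j ∈ s, (∑ x : Fin 4, (b j)^((x:ℕ)) * ((φ j x : ℝ):ℂ)) = val ^ s.card := by
  rw [← Finset.prod_const]
  refine Finset.prod_congr rfl fun j hj => ?_
  rw [← hval]
  exact Finset.sum_congr rfl fun x _ => by rw [hz j hj, hφ j hj x]

-- counting lemma: β = f₁ + f₃
lemma point_count : ∀ (p q : Fin 4),
    ((if p = 1 ∧ q = 0 then 1 else 0) + (if p = 3 ∧ q = 0 then 1 else 0)
    + ((if p = 0 ∧ q = 1 then 1 else 0) + (if p = 0 ∧ q = 3 then 1 else 0))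
    + ((if p = 1 ∧ q = 2 then 1 else 0) + (if p = 3 ∧ q = 2 then 1 else 0))
    + ((if p = 2 ∧ q = 1 then 1 else 0) + (if p = 2 ∧ q = 3 then 1 else 0)) : ℕ)
    = (if (((p:ℕ):ℤ) - ((q:ℕ):ℤ)) % 4 = 1 then 1 else 0)
      + (if (((p:ℕ):ℤ) - ((q:ℕ):ℤ)) % 4 = 3 then 1 else 0) := by decide

lemma beta_count {n : ℕ} (u v : Fin n → Fin 4) :
    betaval u v = (DeltaH u v 1).card + (DeltaH u v 3).card := by
  unfold betaval lam1 lam2 lam3 lam4 freq DeltaKS DeltaH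
  simp only [Finset.card_filter, ← Finset.sum_add_distrib]
  exact Finset.sum_congr rfl fun j _ => point_count (u j) (v j)

-- ===================== end auxiliary machinery =====================

/-- Lemma A.4(ii): if (A.16) holds then
V₂ + V₃ = ((−1)^{n(h,1)} / (2^{β/2+1} i^{n₃}))
  [exp((iπ/4)(f₃^h − f₁^h)) + (−1)^{n₃} exp(−(iπ/4)(f₃^h − f₁^h))]. -/
theorem lemmaA4_ii (n : ℕ) (hn : 1 ≤ n) (u v : Fin n → Fin 4)
    (S1 S2 S3 : Finset (Fin n)) (hd : PairwiseDisj S1 S2 S3)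
    (h16 : CondA16 u v S1 S2 S3) :
    V2 u v S1 S2 S3 + V3 u v S1 S2 S3 =
      ((-1 : ℂ) ^ (S3 ∩ DeltaH u v 1).card /
          ((((2 : ℝ) ^ ((betaval u v : ℝ) / 2 + 1) : ℝ) : ℂ) *
            Complex.I ^ S3.card)) *
        (Complex.exp (Complex.I * ((Real.pi : ℂ) / 4) *
            (((((DeltaH u v 3).card : ℤ) - ((DeltaH u v 1).card : ℤ) : ℤ) : ℂ))) +
          (-1 : ℂ) ^ S3.card *
            Complex.exp (-(Complex.I * ((Real.pi : ℂ) / 4) *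
              (((((DeltaH u v 3).card : ℤ) - ((DeltaH u v 1).card : ℤ) : ℤ) : ℂ))))) := by
  classical
  obtain ⟨h12, h13, h23⟩ := hd
  obtain ⟨hS1, hS23, hS4⟩ := h16
  set P := S2 ∩ DeltaH u v 1 with hPdef
  set Q := S2 ∩ DeltaH u v 3 with hQdef
  set R := S3 ∩ DeltaH u v 1 with hRdef
  set T := S3 ∩ DeltaH u v 3 with hTdef
  set S4 := (Finset.univ : Finset (Fin n)) \ (S1 ∪ S2 ∪ S3) with hS4def
  have hmod : ∀ (k : ℤ), ∀ j ∈ DeltaH u v k, hh u v j % 4 = k := by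
    intro k j hj
    exact (Finset.mem_filter.mp hj).2
  -- values of I ^ h_j on the pieces
  have hm1 : ∀ j ∈ S1, Complex.I ^ (hh u v j) = -1 := fun j hj => by
    rw [Ipow_emod, hmod 2 j (hS1 ▸ hj)]; exact Iz2
  have hmP : ∀ j ∈ P, Complex.I ^ (hh u v j) = Complex.I := fun j hj => by
    rw [Ipow_emod, hmod 1 j (Finset.mem_of_mem_inter_right hj), zpow_one]
  have hmQ : ∀ j ∈ Q, Complex.I ^ (hh u v j) = -Complex.I := fun j hj => by
    rw [Ipow_emod, hmod 3 j (Finset.mem_of_mem_inter_right hj)]; exact Iz3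
  have hmR : ∀ j ∈ R, Complex.I ^ (hh u v j) = Complex.I := fun j hj => by
    rw [Ipow_emod, hmod 1 j (Finset.mem_of_mem_inter_right hj), zpow_one]
  have hmT : ∀ j ∈ T, Complex.I ^ (hh u v j) = -Complex.I := fun j hj => by
    rw [Ipow_emod, hmod 3 j (Finset.mem_of_mem_inter_right hj)]; exact Iz3
  have hm4 : ∀ j ∈ S4, Complex.I ^ (hh u v j) = 1 := fun j hj => by
    rw [Ipow_emod, hmod 0 j (hS4 ▸ hj), zpow_zero]
  have hneg : ∀ j : Fin n, Complex.I ^ (-hh u v j) = (Complex.I ^ (hh u v j))⁻¹ :=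
    fun j => zpow_neg _ _
  have hm1' : ∀ j ∈ S1, Complex.I ^ (-hh u v j) = -1 := fun j hj => by
    rw [hneg, hm1 j hj]; norm_num
  have hmP' : ∀ j ∈ P, Complex.I ^ (-hh u v j) = -Complex.I := fun j hj => by
    rw [hneg, hmP j hj, Complex.inv_I]
  have hmQ' : ∀ j ∈ Q, Complex.I ^ (-hh u v j) = Complex.I := fun j hj => by
    rw [hneg, hmQ j hj, inv_neg, Complex.inv_I, neg_neg]
  have hmR' : ∀ j ∈ R, Complex.I ^ (-hh u v j) = -Complex.I := fun j hj => by
    rw [hneg, hmR j hj, Complex.inv_I]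
  have hmT' : ∀ j ∈ T, Complex.I ^ (-hh u v j) = Complex.I := fun j hj => by
    rw [hneg, hmT j hj, inv_neg, Complex.inv_I, neg_neg]
  have hm4' : ∀ j ∈ S4, Complex.I ^ (-hh u v j) = 1 := fun j hj => by
    rw [hneg, hm4 j hj]; norm_num
  -- values of phiF on the pieces
  have hφ1 : ∀ j ∈ S1, ∀ x : Fin 4, phiF S1 S2 S3 j x
      = Real.sin (trigArg ((x:ℕ):ℝ)) * Real.cos (trigArg ((x:ℕ):ℝ)) :=
    fun j hj x => by simp [phiF, hj]
  have hφ2 : ∀ j ∈ S2, ∀ x : Fin 4, phiF S1 S2 S3 j x = Real.cos (trigArg ((x:ℕ):ℝ)) := by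
    intro j hj x
    have h1 : j ∉ S1 := Finset.disjoint_right.mp h12 hj
    simp [phiF, h1, hj]
  have hφ3 : ∀ j ∈ S3, ∀ x : Fin 4, phiF S1 S2 S3 j x = Real.sin (trigArg ((x:ℕ):ℝ)) := by
    intro j hj x
    have h1 : j ∉ S1 := Finset.disjoint_right.mp h13 hj
    have h2 : j ∉ S2 := Finset.disjoint_right.mp h23 hj
    simp [phiF, h1, h2, hj]
  have hφ4 : ∀ j ∈ S4, ∀ x : Fin 4, phiF S1 S2 S3 j x = 1 := by
    intro j hj x
    rw [hS4def, Finset.mem_sdiff] at hj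
    simp only [Finset.mem_union, not_or] at hj
    simp [phiF, hj.2.1.1, hj.2.1.2, hj.2.2]
  have hφP : ∀ j ∈ P, ∀ x : Fin 4, phiF S1 S2 S3 j x = Real.cos (trigArg ((x:ℕ):ℝ)) :=
    fun j hj => hφ2 j (Finset.mem_of_mem_inter_left hj)
  have hφQ : ∀ j ∈ Q, ∀ x : Fin 4, phiF S1 S2 S3 j x = Real.cos (trigArg ((x:ℕ):ℝ)) :=
    fun j hj => hφ2 j (Finset.mem_of_mem_inter_left hj)
  have hφR : ∀ j ∈ R, ∀ x : Fin 4, phiF S1 S2 S3 j x = Real.sin (trigArg ((x:ℕ):ℝ)) :=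
    fun j hj => hφ3 j (Finset.mem_of_mem_inter_left hj)
  have hφT : ∀ j ∈ T, ∀ x : Fin 4, phiF S1 S2 S3 j x = Real.sin (trigArg ((x:ℕ):ℝ)) :=
    fun j hj => hφ3 j (Finset.mem_of_mem_inter_left hj)
  -- decompositions
  have hD13 : Disjoint (DeltaH u v 1) (DeltaH u v 3) := by
    rw [Finset.disjoint_left]
    intro j hj1 hj3
    have e1 := hmod 1 j hj1
    have e3 := hmod 3 j hj3
    omega
  have hS2eq : S2 = P ∪ Q := by
    rw [hPdef, hQdef, ← Finset.inter_union_distrib_left, ← hS23]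
    exact (Finset.inter_eq_left.mpr Finset.subset_union_left).symm
  have hS3eq : S3 = R ∪ T := by
    rw [hRdef, hTdef, ← Finset.inter_union_distrib_left, ← hS23]
    exact (Finset.inter_eq_left.mpr Finset.subset_union_right).symm
  have hdPQ : Disjoint P Q := hD13.mono Finset.inter_subset_right Finset.inter_subset_right
  have hdRT : Disjoint R T := hD13.mono Finset.inter_subset_right Finset.inter_subset_right
  have hdPR : Disjoint P R := h23.mono Finset.inter_subset_left Finset.inter_subset_left
  have hdQT : Disjoint Q T := h23.mono Finset.inter_subset_left Finset.inter_subset_left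
  have hD1eq : DeltaH u v 1 = P ∪ R := by
    rw [hPdef, hRdef, ← Finset.union_inter_distrib_right, hS23]
    exact (Finset.inter_eq_right.mpr Finset.subset_union_left).symm
  have hD3eq : DeltaH u v 3 = Q ∪ T := by
    rw [hQdef, hTdef, ← Finset.union_inter_distrib_right, hS23]
    exact (Finset.inter_eq_right.mpr Finset.subset_union_right).symm
  -- cardinalities
  have hc2 : S2.card = P.card + Q.card := by rw [hS2eq, Finset.card_union_of_disjoint hdPQ]
  have hc3 : S3.card = R.card + T.card := by rw [hS3eq, Finset.card_union_of_disjoint hdRT]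
  have cf1 : (DeltaH u v 1).card = P.card + R.card := by
    rw [hD1eq, Finset.card_union_of_disjoint hdPR]
  have cf3 : (DeltaH u v 3).card = Q.card + T.card := by
    rw [hD3eq, Finset.card_union_of_disjoint hdQT]
  have hcardA : (S1 ∪ S2 ∪ S3).card = S1.card + S2.card + S3.card := by
    rw [Finset.card_union_of_disjoint (Finset.disjoint_union_left.mpr ⟨h13, h23⟩),
      Finset.card_union_of_disjoint h12]
  have hcn : S4.card + (S1.card + S2.card + S3.card) = n := by
    rw [hS4def, ← hcardA, Finset.card_sdiff_add_card_eq_card (Finset.subset_univ _),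
      Finset.card_univ, Fintype.card_fin]
  have hcβ : betaval u v = (P.card + R.card) + (Q.card + T.card) := by
    rw [beta_count, cf1, cf3]
  -- split the product over univ
  have hsplit : ∀ F : Fin n → ℂ, ∏ j, F j
      = (∏ j ∈ S4, F j) * (((∏ j ∈ S1, F j) * ((∏ j ∈ P, F j) * (∏ j ∈ Q, F j)))
        * ((∏ j ∈ R, F j) * (∏ j ∈ T, F j))) := by
    intro F
    rw [← Finset.prod_sdiff (Finset.subset_univ (S1 ∪ S2 ∪ S3)), ← hS4def]
    congr 1
    rw [Finset.prod_union (Finset.disjoint_union_left.mpr ⟨h13, h23⟩), Finset.prod_union h12,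
      hS2eq, Finset.prod_union hdPQ, hS3eq, Finset.prod_union hdRT]
  -- evaluate the two products
  set sq2 : ℂ := ((Real.sqrt 2 : ℝ) : ℂ) with hsq2
  have hv2prod : ∏ j, (∑ x : Fin 4,
        (Complex.I ^ (hh u v j))^((x:ℕ)) * ((phiF S1 S2 S3 j x : ℝ):ℂ))
      = 4 ^ S4.card * ((2 ^ S1.card * ((sq2*(1-Complex.I)) ^ P.card
          * (sq2*(1+Complex.I)) ^ Q.card))
        * ((sq2*(1+Complex.I)) ^ R.card * (sq2*(1-Complex.I)) ^ T.card)) := by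
    rw [hsplit]
    rw [piece_eval _ _ S4 1 (fun _ => (1:ℝ)) hm4 hφ4 4 sum_one,
      piece_eval _ _ S1 (-1) _ hm1 hφ1 2 sum_sc,
      piece_eval _ _ P Complex.I _ hmP hφP (sq2*(1-Complex.I)) sum_c_I,
      piece_eval _ _ Q (-Complex.I) _ hmQ hφQ (sq2*(1+Complex.I)) sum_c_negI,
      piece_eval _ _ R Complex.I _ hmR hφR (sq2*(1+Complex.I)) sum_s_I,
      piece_eval _ _ T (-Complex.I) _ hmT hφT (sq2*(1-Complex.I)) sum_s_negI]
  have hv3prod : ∏ j, (∑ x : Fin 4,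
        (Complex.I ^ (-hh u v j))^((x:ℕ)) * ((phiF S1 S2 S3 j x : ℝ):ℂ))
      = 4 ^ S4.card * ((2 ^ S1.card * ((sq2*(1+Complex.I)) ^ P.card
          * (sq2*(1-Complex.I)) ^ Q.card))
        * ((sq2*(1-Complex.I)) ^ R.card * (sq2*(1+Complex.I)) ^ T.card)) := by
    rw [hsplit]
    rw [piece_eval _ _ S4 1 (fun _ => (1:ℝ)) hm4' hφ4 4 sum_one,
      piece_eval _ _ S1 (-1) _ hm1' hφ1 2 sum_sc,
      piece_eval _ _ P (-Complex.I) _ hmP' hφP (sq2*(1+Complex.I)) sum_c_negI,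
      piece_eval _ _ Q Complex.I _ hmQ' hφQ (sq2*(1-Complex.I)) sum_c_I,
      piece_eval _ _ R (-Complex.I) _ hmR' hφR (sq2*(1-Complex.I)) sum_s_negI,
      piece_eval _ _ T Complex.I _ hmT' hφT (sq2*(1+Complex.I)) sum_s_I]
  set Cc : ℂ := ((coefPow n (2 * S1.card + S2.card + S3.card) : ℝ) : ℂ) * (1 / 4) with hCcdef
  have hV2' : V2 u v S1 S2 S3
      = Cc * (2:ℂ)^(2*S4.card + S1.card + (P.card+Q.card+R.card+T.card))
        * wq^(7*P.card + Q.card + R.card + 7*T.card) := by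
    rw [V2_eq u v S1 S2 S3 ⟨h12, h13, h23⟩, ← hCcdef, hv2prod, two_wq, two_wq_inv]
    simp only [mul_pow, wq_inv7, ← pow_mul, show (4:ℂ) = 2^2 by norm_num]
    ring
  have hV3' : V3 u v S1 S2 S3
      = Cc * (2:ℂ)^(2*S4.card + S1.card + (P.card+Q.card+R.card+T.card))
        * wq^(P.card + 7*Q.card + 7*R.card + T.card) := by
    rw [V3_eq u v S1 S2 S3 ⟨h12, h13, h23⟩, ← hCcdef, hv3prod, two_wq, two_wq_inv]
    simp only [mul_pow, wq_inv7, ← pow_mul, show (4:ℂ) = 2^2 by norm_num]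
    ring
  -- the magnitude
  have hmag : Cc * (2:ℂ)^(2*S4.card + S1.card + (P.card+Q.card+R.card+T.card))
      = ((((2:ℝ) ^ ((betaval u v : ℝ)/2 + 1) : ℝ)) : ℂ)⁻¹ := by
    rw [hCcdef]
    have r2 : (S2.card : ℝ) = P.card + Q.card := by exact_mod_cast hc2
    have r3 : (S3.card : ℝ) = R.card + T.card := by exact_mod_cast hc3
    have rn : (S4.card : ℝ) + ((S1.card : ℝ) + S2.card + S3.card) = n := by exact_mod_cast hcn
    have rβ : (betaval u v : ℝ) = ((P.card : ℝ) + R.card) + ((Q.card : ℝ) + T.card) := by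
      exact_mod_cast hcβ
    rw [show ((1:ℂ)/4) = ((1/4 : ℝ) : ℂ) by norm_num,
      show ((2:ℂ)) = ((2:ℝ) : ℂ) by norm_num,
      ← Complex.ofReal_pow, ← Complex.ofReal_mul, ← Complex.ofReal_mul, ← Complex.ofReal_inv]
    congr 1
    rw [coefPow, show (1/4 : ℝ) = (2:ℝ) ^ ((-2 : ℤ) : ℝ) by
        rw [show ((-2 : ℤ) : ℝ) = ((-2 : ℤ) : ℝ) from rfl, Real.rpow_intCast]; norm_num,
      ← Real.rpow_natCast (2:ℝ) (2*S4.card + S1.card + (P.card+Q.card+R.card+T.card)),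
      ← Real.rpow_add two_pos, ← Real.rpow_add two_pos,
      ← Real.rpow_neg (le_of_lt two_pos)]
    congr 1
    push_cast
    linarith [r2, r3, rn, rβ]
  have hdiv : ((-1:ℂ))^R.card
        / (((((2:ℝ) ^ ((betaval u v : ℝ)/2 + 1) : ℝ)) : ℂ) * Complex.I ^ S3.card)
      = ((((2:ℝ) ^ ((betaval u v : ℝ)/2 + 1) : ℝ)) : ℂ)⁻¹
        * (wq^(4*R.card) * wq^(14*S3.card)) := by
    rw [← wq_sq, ← pow_mul, show ((-1:ℂ)) = wq^(4:ℕ) from wq_pow4.symm, ← pow_mul,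
      div_eq_mul_inv, mul_inv, wq_pow_inv, show 7*(2*S3.card) = 14*S3.card by ring]
    ring
  have hexpA : Complex.exp (Complex.I * ((Real.pi:ℂ)/4) *
        (((((DeltaH u v 3).card : ℤ) - ((DeltaH u v 1).card : ℤ) : ℤ)) : ℂ))
      = wq^(Q.card+T.card) * wq^(7*(P.card+R.card)) := by
    rw [expQuarter, cf1, cf3, wq_zpow_sub]
  have hexpB : Complex.exp (-(Complex.I * ((Real.pi:ℂ)/4) *
        (((((DeltaH u v 3).card : ℤ) - ((DeltaH u v 1).card : ℤ) : ℤ)) : ℂ)))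
      = wq^(P.card+R.card) * wq^(7*(Q.card+T.card)) := by
    rw [show -(Complex.I * ((Real.pi:ℂ)/4) *
        (((((DeltaH u v 3).card : ℤ) - ((DeltaH u v 1).card : ℤ) : ℤ)) : ℂ))
      = Complex.I * ((Real.pi:ℂ)/4) *
        (((-((((DeltaH u v 3).card : ℤ) - ((DeltaH u v 1).card : ℤ))) : ℤ) : ℂ)) by
        push_cast; ring,
      expQuarter, neg_sub, cf1, cf3, wq_zpow_sub]
  have hneg1 : ((-1:ℂ))^S3.card = wq^(4*S3.card) := by
    rw [show ((-1:ℂ)) = wq^(4:ℕ) from wq_pow4.symm, ← pow_mul]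
  rw [hV2', hV3', hmag, hdiv, hexpA, hexpB, hneg1, hc3]
  rw [wq_pow_congr (7*P.card + Q.card + R.card + 7*T.card)
      (4*R.card + 14*(R.card+T.card) + ((Q.card+T.card) + 7*(P.card+R.card))) (by omega),
    wq_pow_congr (P.card + 7*Q.card + 7*R.card + T.card)
      (4*R.card + 14*(R.card+T.card)
        + (4*(R.card+T.card) + ((P.card+R.card) + 7*(Q.card+T.card)))) (by omega)]
  ring
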